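/- arXiv:2311.01299 — 3 statements merged into one kernel-verified Lean document; each statement's English description precedes it below -/
import Mathlib

section
/- Let f₁, f₂ : ℝ^d → ℝ be C¹ functions and set f = f₁ − f₂. Then for every x, ∇f(x) · (H_0(∇f₁(x)) − H_0(∇f₂(x))) ≥ |∇f(x)|² / (1 + max{‖∇f₁‖_∞, ‖∇f₂‖_∞}²)^{3/2}, where H_0(z) = z(1+|z|²)^{−1/2}. -/
open scoped RealInnerProductSpace

/-!
With `a = √(1 + ‖u‖²)` and `b = √(1 + ‖v‖²)`, the pairing `⟪u - v, u / a - v / b⟫` equals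
`‖u - v‖² (a + b) / (2ab) - (a - b)² (a + b) / (2ab)`. Since `a² - b² = ‖u‖² - ‖v‖²` and
`|‖u‖ - ‖v‖| ≤ ‖u - v‖`, the negative term is at most `‖u - v‖² (‖u‖ + ‖v‖)² / (2ab(a + b))`, and
`(a + b)² - (‖u‖ + ‖v‖)² ≥ 4` because `ab ≥ 1 + ‖u‖‖v‖` (Cauchy–Schwarz). This leaves
`2‖u - v‖² / (ab(a + b)) ≥ ‖u - v‖² / (1 + K²)^{3/2}`.
-/

theorem gradient_sub {F : Type*} [NormedAddCommGroup F] [InnerProductSpace ℝ F] [CompleteSpace F]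
    {f g : F → ℝ} {x : F} (hf : DifferentiableAt ℝ f x) (hg : DifferentiableAt ℝ g x) :
    gradient (fun y => f y - g y) x = gradient f x - gradient g x := by
  simp only [gradient, fderiv_fun_sub hf hg, map_sub]

theorem real_inner_sub_smul_sub_smul {E : Type*} [NormedAddCommGroup E] [InnerProductSpace ℝ E]
    (u v : E) (α β : ℝ) :
    ⟪u - v, α • u - β • v⟫ = (α + β) / 2 * ‖u - v‖ ^ 2 + (α - β) / 2 * (‖u‖ ^ 2 - ‖v‖ ^ 2) := by
  rw [norm_sub_sq_real, inner_sub_left, inner_sub_right, inner_sub_right, real_inner_smul_right,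
    real_inner_smul_right, real_inner_smul_right, real_inner_smul_right, real_inner_self_eq_norm_sq,
    real_inner_self_eq_norm_sq, real_inner_comm v u]
  ring

theorem one_add_mul_le_mul_of_sq_eq {a b p q : ℝ} (ha : 0 ≤ a) (hb : 0 ≤ b)
    (ha2 : a ^ 2 = 1 + p ^ 2) (hb2 : b ^ 2 = 1 + q ^ 2) : 1 + p * q ≤ a * b := by
  have hsq : (1 + p * q) ^ 2 ≤ (a * b) ^ 2 := by
    rw [mul_pow, ha2, hb2]; nlinarith [sq_nonneg (p - q)]
  exact abs_le_of_sq_le_sq' hsq (by positivity) |>.2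

theorem div_cube_le_of_sq_eq_one_add_sq {a b p q s D : ℝ}
    (ha : 0 < a) (hb : 0 < b) (ha2 : a ^ 2 = 1 + p ^ 2) (hb2 : b ^ 2 = 1 + q ^ 2)
    (has : a ≤ s) (hbs : b ≤ s) (hD : (p - q) ^ 2 ≤ D) :
    D / s ^ 3 ≤ (a⁻¹ + b⁻¹) / 2 * D + (a⁻¹ - b⁻¹) / 2 * (p ^ 2 - q ^ 2) := by
  have hD0 : 0 ≤ D := (sq_nonneg _).trans hD
  have hs : 0 < s := ha.trans_le has
  have hrhs : (a⁻¹ + b⁻¹) / 2 * D + (a⁻¹ - b⁻¹) / 2 * (p ^ 2 - q ^ 2)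
      = ((a + b) ^ 2 * D - (p ^ 2 - q ^ 2) ^ 2) / (2 * a * b * (a + b)) := by
    have : p ^ 2 - q ^ 2 = a ^ 2 - b ^ 2 := by rw [ha2, hb2]; ring
    rw [this]; field_simp; ring
  have hpq : (p ^ 2 - q ^ 2) ^ 2 ≤ D * (p + q) ^ 2 := by
    rw [show (p ^ 2 - q ^ 2) ^ 2 = (p - q) ^ 2 * (p + q) ^ 2 by ring]
    exact mul_le_mul_of_nonneg_right hD (sq_nonneg _)
  have hab := one_add_mul_le_mul_of_sq_eq ha.le hb.le ha2 hb2
  have hnum : 4 * D ≤ (a + b) ^ 2 * D - (p ^ 2 - q ^ 2) ^ 2 := by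
    nlinarith [mul_le_mul_of_nonneg_right (show (p + q) ^ 2 + 4 ≤ (a + b) ^ 2 by nlinarith) hD0]
  have hden : 2 * a * b * (a + b) ≤ 4 * s ^ 3 := by
    have hab_s : a * b ≤ s * s := mul_le_mul has hbs hb.le hs.le
    nlinarith [mul_le_mul hab_s has ha.le (by positivity), mul_le_mul hab_s hbs hb.le (by positivity)]
  rw [hrhs, div_le_div_iff₀ (by positivity) (by positivity)]
  linarith [mul_le_mul_of_nonneg_left hden hD0, mul_le_mul_of_nonneg_right hnum (pow_nonneg hs.le 3)]

theorem norm_sub_sq_div_le_inner_sub_smul_sub_smul {E : Type*} [NormedAddCommGroup E]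
    [InnerProductSpace ℝ E] {u v : E} {K : ℝ} (hu : ‖u‖ ≤ K) (hv : ‖v‖ ≤ K) :
    ‖u - v‖ ^ 2 / (1 + K ^ 2) ^ ((3 : ℝ) / 2) ≤
      ⟪u - v, (√(1 + ‖u‖ ^ 2))⁻¹ • u - (√(1 + ‖v‖ ^ 2))⁻¹ • v⟫ := by
  rw [real_inner_sub_smul_sub_smul, Real.rpow_div_two_eq_sqrt _ (by positivity),
    show (3 : ℝ) = (3 : ℕ) by norm_num, Real.rpow_natCast]
  refine div_cube_le_of_sq_eq_one_add_sq (by positivity) (by positivity)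
    (Real.sq_sqrt (by positivity)) (Real.sq_sqrt (by positivity))
    (Real.sqrt_le_sqrt (by gcongr)) (Real.sqrt_le_sqrt (by gcongr)) ?_
  simpa only [sq_abs] using pow_le_pow_left₀ (abs_nonneg _) (abs_norm_sub_norm_le u v) 2

/-- For C¹ functions `f₁, f₂` with gradients uniformly bounded by `K`
(`K` playing the role of `max{‖∇f₁‖_∞, ‖∇f₂‖_∞}`), setting `f = f₁ - f₂` and
`H₀(z) = z(1+|z|²)^{-1/2}`, one has the pointwise strong monotonicity bound
`∇f(x) · (H₀(∇f₁(x)) - H₀(∇f₂(x))) ≥ |∇f(x)|²/(1+K²)^{3/2}`. -/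
theorem stmt_2 (d : ℕ) (f₁ f₂ : EuclideanSpace ℝ (Fin d) → ℝ)
    (hf₁ : ContDiff ℝ 1 f₁) (hf₂ : ContDiff ℝ 1 f₂)
    (H0 : EuclideanSpace ℝ (Fin d) → EuclideanSpace ℝ (Fin d))
    (hH0 : ∀ z, H0 z = (Real.sqrt (1 + ‖z‖ ^ 2))⁻¹ • z)
    (K : ℝ)
    (hK₁ : ∀ x, ‖gradient f₁ x‖ ≤ K) (hK₂ : ∀ x, ‖gradient f₂ x‖ ≤ K) :
    ∀ x, ‖gradient (fun y => f₁ y - f₂ y) x‖ ^ 2 / (1 + K ^ 2) ^ ((3 : ℝ) / 2) ≤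
      ⟪gradient (fun y => f₁ y - f₂ y) x, H0 (gradient f₁ x) - H0 (gradient f₂ x)⟫ := by
  intro x
  rw [gradient_sub (hf₁.differentiable one_ne_zero x) (hf₂.differentiable one_ne_zero x),
    hH0, hH0]
  exact norm_sub_sq_div_le_inner_sub_smul_sub_smul (hK₁ x) (hK₂ x)
end

section
/- Let σ > 0, g ≥ 0, γ ∈ ℝ\{0}, and m(ξ) = |ξ| tanh(b|ξ|) with b > 0 (or m(ξ) = |ξ|). The symbol a(ξ) = 1 − iγ ξ₁ / ((σ|ξ|² + g) m(ξ)) satisfies: a(ξ) ≠ 0 for all ξ ≠ 0, and both a and 1/a are bounded together with all derivatives of order |β| being O(|ξ|^{−|β|}) for |ξ| > 1/2. -/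
/-!
Away from the origin every ingredient of `a` is a classical symbol, and symbol classes are
closed under sums and products (Leibniz rule) and under real powers of elliptic symbols: since
`D(v ^ p) = p v ^ (p - 1) Dv`, bounds on `n + 1` derivatives of `v ^ p` follow from bounds on
`n` derivatives of `v ^ (p - 1)`, by induction on `n` for all `p` at once. Hence
`‖ξ‖ = (‖ξ‖²) ^ (1/2)` has order 1, `exp (-2b‖ξ‖)` decays faster than every power, so
`tanh (b‖ξ‖) = 2 (1 + exp (-2b‖ξ‖))⁻¹ - 1` has order 0, and `(σ‖ξ‖² + g) m(ξ)` is elliptic of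
order 3. Then `t = γ ξ₁ / ((σ‖ξ‖² + g) m(ξ))` has order -2, and both `a = 1 - i t` and
`a⁻¹ = (1 + i t) / (1 + t²)` have order 0. Finally `a ≠ 0` because `Re a = 1`.
-/

open Set Metric Real
open scoped ContDiff NNReal Topology

lemma Real.rpow_le_rpow_mul_rpow {r x s t : ℝ} (hr : 0 < r) (hrx : r ≤ x) (hst : s ≤ t) :
    x ^ s ≤ r ^ (s - t) * x ^ t := by
  have hx : 0 < x := hr.trans_le hrx
  calc x ^ s = x ^ (s - t) * x ^ t := by rw [← rpow_add hx, sub_add_cancel]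
    _ ≤ r ^ (s - t) * x ^ t :=
      mul_le_mul_of_nonneg_right (rpow_le_rpow_of_nonpos hr hrx (by linarith)) (by positivity)

lemma Real.rpow_le_max_mul_rpow {x y δ C p : ℝ} (hy : 0 < y) (hδ : 0 < δ) (hlow : δ * y ≤ x)
    (hup : x ≤ C * y) : x ^ p ≤ max (C ^ p) (δ ^ p) * y ^ p := by
  have hx : 0 < x := (mul_pos hδ hy).trans_le hlow
  rcases le_total 0 p with hp | hp
  · calc x ^ p ≤ (C * y) ^ p := rpow_le_rpow hx.le hup hp
      _ = C ^ p * y ^ p := mul_rpow (nonneg_of_mul_nonneg_left (hx.le.trans hup) hy) hy.le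
      _ ≤ _ := by gcongr; exact le_max_left _ _
  · calc x ^ p ≤ (δ * y) ^ p := rpow_le_rpow_of_nonpos (by positivity) hlow hp
      _ = δ ^ p * y ^ p := mul_rpow hδ.le hy.le
      _ ≤ _ := by gcongr; exact le_max_right _ _

lemma Real.exp_neg_mul_le {δ x : ℝ} (hδ : 0 < δ) (hx : 0 < x) (K : ℕ) :
    exp (-(δ * x)) ≤ K.factorial / δ ^ K * x ^ (-(K : ℝ)) := by
  have h := pow_div_factorial_le_exp (δ * x) (by positivity) K
  rw [exp_neg, rpow_neg hx.le, rpow_natCast]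
  calc (exp (δ * x))⁻¹ ≤ ((δ * x) ^ K / K.factorial)⁻¹ := inv_anti₀ (by positivity) h
    _ = _ := by rw [inv_div, mul_pow]; field_simp

lemma Real.tanh_strictMono : StrictMono tanh := fun x y hxy => by
  rwa [← artanh_lt_artanh_iff ⟨neg_one_lt_tanh x, tanh_lt_one x⟩
    ⟨neg_one_lt_tanh y, tanh_lt_one y⟩, artanh_tanh, artanh_tanh]

lemma Real.tanh_eq_two_mul_inv_sub_one (x : ℝ) : tanh x = 2 * (1 + exp (-(2 * x)))⁻¹ - 1 := by
  have h : exp (-(2 * x)) = exp (-x) * exp (-x) := by rw [← exp_add]; ring_nf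
  have hx : exp x * exp (-x) = 1 := by rw [← exp_add, add_neg_cancel, exp_zero]
  rw [tanh_eq, h]
  field_simp
  linear_combination 2 * exp (-x) * hx

lemma Complex.one_sub_I_mul_ofReal_ne_zero (t : ℝ) : 1 - Complex.I * t ≠ 0 :=
  fun h => by simpa using congrArg re h

lemma Complex.inv_one_sub_I_mul_ofReal (t : ℝ) :
    (1 - Complex.I * t)⁻¹ = ((1 + t ^ 2)⁻¹ : ℝ) • (1 + t • Complex.I) := by
  have h : (1 + (t : ℂ) ^ 2) ≠ 0 := by exact_mod_cast (by positivity : (1 + t ^ 2 : ℝ) ≠ 0)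
  rw [real_smul, real_smul, inv_eq_of_mul_eq_one_right]
  push_cast
  field_simp
  linear_combination (-(t : ℂ) ^ 2) * I_sq

lemma norm_pos_of_mem_compl_closedBall {E : Type*} [NormedAddCommGroup E] {r : ℝ≥0} {ξ : E}
    (hξ : ξ ∈ (closedBall (0 : E) r)ᶜ) : 0 < ‖ξ‖ :=
  r.2.trans_lt (by simpa using hξ)

section SymbolCalculus

variable {E F G H : Type*} [NormedAddCommGroup E] [NormedSpace ℝ E] [NormedAddCommGroup F]
  [NormedSpace ℝ F] [NormedAddCommGroup G] [NormedSpace ℝ G] [NormedAddCommGroup H]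
  [NormedSpace ℝ H] {r : ℝ≥0} {N M : ℕ∞} {k l : ℝ} {f f' : E → F} {g : E → G}

/-- The estimates of the Hörmander symbol class `S^k` on `‖ξ‖ > r`, for derivatives of order at
most `N`; finite `N` is what the inductions on the number of derivatives run over. -/
def IsSymbol (r : ℝ≥0) (N : ℕ∞) (k : ℝ) (f : E → F) : Prop :=
  ContDiffOn ℝ ∞ f (closedBall 0 r)ᶜ ∧ ∃ C : ℕ → ℝ, ∀ i : ℕ, i ≤ N →
    ∀ ξ ∈ (closedBall (0 : E) r)ᶜ, ‖iteratedFDeriv ℝ i f ξ‖ ≤ C i * ‖ξ‖ ^ (k - i)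

namespace IsSymbol

lemma contDiffAt (hf : IsSymbol r N k f) {ξ : E} (hξ : ξ ∈ (closedBall (0 : E) r)ᶜ) :
    ContDiffAt ℝ ∞ f ξ :=
  hf.1.contDiffAt (isClosed_closedBall.isOpen_compl.mem_nhds hξ)

lemma of_le (hf : IsSymbol r N k f) (hMN : M ≤ N) : IsSymbol r M k f :=
  ⟨hf.1, hf.2.imp fun _ hC i hi => hC i (hi.trans hMN)⟩

lemma mono (hf : IsSymbol r N k f) (hr : 0 < r) (hkl : k ≤ l) : IsSymbol r N l f := by
  obtain ⟨hsmooth, C, hC⟩ := hf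
  refine ⟨hsmooth, fun i => |C i| * r ^ (k - l), fun i hi ξ hξ => ?_⟩
  have hrξ : (r : ℝ) ≤ ‖ξ‖ := (by simpa using hξ : (r : ℝ) < ‖ξ‖).le
  calc ‖iteratedFDeriv ℝ i f ξ‖ ≤ |C i| * ‖ξ‖ ^ (k - i) :=
        (hC i hi ξ hξ).trans (by gcongr; exact le_abs_self _)
    _ ≤ |C i| * (r ^ (k - i - (l - i)) * ‖ξ‖ ^ (l - i)) := by
        gcongr
        exact Real.rpow_le_rpow_mul_rpow hr hrξ (by linarith)
    _ = |C i| * r ^ (k - l) * ‖ξ‖ ^ (l - i) := by ring_nf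

lemma congr (hf : IsSymbol r N k f) (hff' : EqOn f f' (closedBall (0 : E) r)ᶜ) :
    IsSymbol r N k f' := by
  obtain ⟨hsmooth, C, hC⟩ := hf
  refine ⟨hsmooth.congr fun ξ hξ => (hff' hξ).symm, C, fun i hi ξ hξ => ?_⟩
  have hloc : f =ᶠ[𝓝 ξ] f' :=
    Filter.eventuallyEq_of_mem (isClosed_closedBall.isOpen_compl.mem_nhds hξ) hff'
  rw [← (hloc.iteratedFDeriv ℝ i).eq_of_nhds]
  exact hC i hi ξ hξ

lemma zero_of_bound (hf : ContDiffOn ℝ ∞ f (closedBall 0 r)ᶜ) (C₀ : ℝ)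
    (h₀ : ∀ ξ ∈ (closedBall (0 : E) r)ᶜ, ‖f ξ‖ ≤ C₀ * ‖ξ‖ ^ k) : IsSymbol r 0 k f := by
  refine ⟨hf, fun _ => C₀, fun i hi ξ hξ => ?_⟩
  obtain rfl : i = 0 := by exact_mod_cast nonpos_iff_eq_zero.1 hi
  simpa using h₀ ξ hξ

lemma fderiv (hf : IsSymbol r (N + 1) k f) : IsSymbol r N (k - 1) (fderiv ℝ f) := by
  obtain ⟨hsmooth, C, hC⟩ := hf
  refine ⟨hsmooth.fderiv_of_isOpen isClosed_closedBall.isOpen_compl (by simp),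
    fun i => C (i + 1), fun i hi ξ hξ => ?_⟩
  rw [norm_iteratedFDeriv_fderiv]
  convert hC (i + 1) (by push_cast; gcongr) ξ hξ using 3
  push_cast
  ring

lemma of_fderiv (hf : ContDiffOn ℝ ∞ f (closedBall 0 r)ᶜ) (C₀ : ℝ)
    (h₀ : ∀ ξ ∈ (closedBall (0 : E) r)ᶜ, ‖f ξ‖ ≤ C₀ * ‖ξ‖ ^ k)
    (hDf : IsSymbol r N (k - 1) (_root_.fderiv ℝ f)) : IsSymbol r (N + 1) k f := by
  obtain ⟨-, C, hC⟩ := hDf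
  refine ⟨hf, fun | 0 => C₀ | i + 1 => C i, fun i hi ξ hξ => ?_⟩
  rcases i with _ | i
  · simpa using h₀ ξ hξ
  · rw [← norm_iteratedFDeriv_fderiv]
    have hi' : (i : ℕ∞) ≤ N := by
      push_cast at hi
      exact (ENat.add_le_add_iff_right ENat.one_ne_top).1 hi
    convert hC i hi' ξ hξ using 3
    push_cast
    ring

lemma add (hf : IsSymbol r N k f) (hf' : IsSymbol r N k f') :
    IsSymbol r N k fun ξ => f ξ + f' ξ := by
  obtain ⟨hfs, C, hC⟩ := hf
  obtain ⟨hfs', C', hC'⟩ := hf'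
  refine ⟨hfs.add hfs', fun i => C i + C' i, fun i hi ξ hξ => ?_⟩
  have hU : IsOpen (closedBall (0 : E) r)ᶜ := isClosed_closedBall.isOpen_compl
  have hle : ((i : ℕ) : WithTop ℕ∞) ≤ ∞ := by exact_mod_cast le_top
  rw [fun_iteratedFDeriv_add_apply ((hfs.contDiffAt (hU.mem_nhds hξ)).of_le hle)
    ((hfs'.contDiffAt (hU.mem_nhds hξ)).of_le hle), add_mul]
  exact (norm_add_le _ _).trans (add_le_add (hC i hi ξ hξ) (hC' i hi ξ hξ))

lemma neg (hf : IsSymbol r N k f) : IsSymbol r N k fun ξ => -f ξ := by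
  obtain ⟨hfs, C, hC⟩ := hf
  refine ⟨hfs.neg, C, fun i hi ξ hξ => ?_⟩
  rw [← Pi.neg_def, iteratedFDeriv_neg_apply, norm_neg]
  exact hC i hi ξ hξ

lemma sub (hf : IsSymbol r N k f) (hf' : IsSymbol r N k f') :
    IsSymbol r N k fun ξ => f ξ - f' ξ := by
  simpa only [sub_eq_add_neg] using hf.add hf'.neg

lemma bilinear (B : F →L[ℝ] G →L[ℝ] H) (hf : IsSymbol r N k f) (hg : IsSymbol r N l g) :
    IsSymbol r N (k + l) fun ξ => B (f ξ) (g ξ) := by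
  obtain ⟨hfs, Cf, hCf⟩ := hf
  obtain ⟨hgs, Cg, hCg⟩ := hg
  refine ⟨B.isBoundedBilinearMap.contDiff.comp₂_contDiffOn hfs hgs,
    fun i => ‖B‖ * ∑ j ∈ Finset.range (i + 1), i.choose j * Cf j * Cg (i - j),
    fun i hi ξ hξ => ?_⟩
  have hU : IsOpen (closedBall (0 : E) r)ᶜ := isClosed_closedBall.isOpen_compl
  have hLeibniz := B.norm_iteratedFDerivWithin_le_of_bilinear hfs hgs hU.uniqueDiffOn hξ
    (n := i) (by exact_mod_cast le_top)
  simp only [iteratedFDerivWithin_of_isOpen _ hU hξ] at hLeibniz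
  rw [mul_assoc, Finset.sum_mul]
  refine hLeibniz.trans
    (mul_le_mul_of_nonneg_left (Finset.sum_le_sum fun j hj => ?_) (norm_nonneg B))
  have hji : j ≤ i := Nat.lt_succ_iff.1 (Finset.mem_range.1 hj)
  have hfj := hCf j ((Nat.cast_le.2 hji).trans hi) ξ hξ
  have hgj := hCg (i - j) ((Nat.cast_le.2 (Nat.sub_le i j)).trans hi) ξ hξ
  calc _ ≤ (i.choose j : ℝ) * (Cf j * ‖ξ‖ ^ (k - j)) *
          (Cg (i - j) * ‖ξ‖ ^ (l - (i - j : ℕ))) := by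
        have := (norm_nonneg _).trans hfj
        gcongr
    _ = _ := by
        rw [Nat.cast_sub hji, mul_assoc, mul_mul_mul_comm,
          ← rpow_add (norm_pos_of_mem_compl_closedBall hξ)]
        ring_nf

lemma mul {f₁ f₂ : E → ℝ} (hf₁ : IsSymbol r N k f₁) (hf₂ : IsSymbol r N l f₂) :
    IsSymbol r N (k + l) fun ξ => f₁ ξ * f₂ ξ :=
  hf₁.bilinear (ContinuousLinearMap.mul ℝ ℝ) hf₂

lemma smul {c : E → ℝ} (hc : IsSymbol r N k c) (hf : IsSymbol r N l f) :
    IsSymbol r N (k + l) fun ξ => c ξ • f ξ :=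
  hc.bilinear (ContinuousLinearMap.lsmul ℝ ℝ) hf

lemma exists_pos_bound (hf : IsSymbol r N k f) {n : ℕ} (hn : n ≤ N) :
    ∃ C > 0, ∀ ξ ∈ (closedBall (0 : E) r)ᶜ, ‖iteratedFDeriv ℝ n f ξ‖ ≤ C * ‖ξ‖ ^ (k - n) := by
  obtain ⟨-, C, hC⟩ := hf
  exact ⟨max (C n) 1, by positivity, fun ξ hξ =>
    (hC n hn ξ hξ).trans (by gcongr; exact le_max_left _ _)⟩

end IsSymbol

lemma isSymbol_const (c : F) : IsSymbol r N 0 fun _ : E => c := by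
  refine ⟨contDiffOn_const, fun i => if i = 0 then ‖c‖ else 0, fun i _ ξ _ => ?_⟩
  rcases eq_or_ne i 0 with rfl | hi
  · simp
  · simp [iteratedFDeriv_const_of_ne hi, hi]

lemma isSymbol_top_of_forall (h : ∀ n : ℕ, IsSymbol r n k f) : IsSymbol r ⊤ k f := by
  choose C hC using fun n => (h n).2
  exact ⟨(h 0).1, fun i => C i i, fun i _ => hC i i le_rfl⟩

lemma ContinuousLinearMap.isSymbol (L : E →L[ℝ] F) : IsSymbol r ⊤ 1 L := by
  have hDL : IsSymbol r ⊤ (1 - 1) (fderiv ℝ L) := by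
    rw [sub_self, show fderiv ℝ L = fun _ => L from funext fun _ => L.fderiv]
    exact isSymbol_const L
  exact IsSymbol.of_fderiv L.contDiff.contDiffOn ‖L‖ (fun ξ _ => by simpa using L.le_opNorm ξ) hDL

namespace IsSymbol

lemma rpow {v : E → ℝ} {δ : ℝ} (hv : IsSymbol r ⊤ k v) (hδ : 0 < δ)
    (hlow : ∀ ξ ∈ (closedBall (0 : E) r)ᶜ, δ * ‖ξ‖ ^ k ≤ v ξ) (p : ℝ) :
    IsSymbol r ⊤ (p * k) fun ξ => v ξ ^ p := by
  have hpos : ∀ ξ ∈ (closedBall (0 : E) r)ᶜ, 0 < v ξ := fun ξ hξ =>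
    (mul_pos hδ (rpow_pos_of_pos (norm_pos_of_mem_compl_closedBall hξ) k)).trans_le (hlow ξ hξ)
  have hsmooth (p : ℝ) : ContDiffOn ℝ ∞ (fun ξ => v ξ ^ p) (closedBall 0 r)ᶜ :=
    hv.1.rpow_const_of_ne fun ξ hξ => (hpos ξ hξ).ne'
  obtain ⟨C, hC⟩ := hv.2
  have hbound (p : ℝ) : ∀ ξ ∈ (closedBall (0 : E) r)ᶜ,
      ‖v ξ ^ p‖ ≤ max (C 0 ^ p) (δ ^ p) * ‖ξ‖ ^ (p * k) := by
    intro ξ hξ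
    have hup : v ξ ≤ C 0 * ‖ξ‖ ^ k := by
      have h₀ := hC 0 (by simp) ξ hξ
      rw [norm_iteratedFDeriv_zero, Nat.cast_zero, sub_zero] at h₀
      exact (le_norm_self _).trans h₀
    rw [norm_of_nonneg (rpow_nonneg (hpos ξ hξ).le p), mul_comm p, rpow_mul (norm_nonneg ξ)]
    exact Real.rpow_le_max_mul_rpow (rpow_pos_of_pos (norm_pos_of_mem_compl_closedBall hξ) k) hδ
      (hlow ξ hξ) hup
  have hderiv (p : ℝ) : EqOn (fun ξ => (p * v ξ ^ (p - 1)) • _root_.fderiv ℝ v ξ)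
      (_root_.fderiv ℝ fun ξ => v ξ ^ p) (closedBall 0 r)ᶜ := fun ξ hξ =>
    (((hv.contDiffAt hξ).differentiableAt (by simp)).hasFDerivAt.rpow_const
      (Or.inl (hpos ξ hξ).ne')).fderiv.symm
  have hDv : IsSymbol r ⊤ (k - 1) (_root_.fderiv ℝ v) := IsSymbol.fderiv (N := ⊤) hv
  refine isSymbol_top_of_forall fun n => ?_
  induction n generalizing p with
  | zero => exact zero_of_bound (hsmooth p) _ (hbound p)
  | succ n ih =>
    rw [Nat.cast_succ]
    refine of_fderiv (hsmooth p) _ (hbound p) ?_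
    convert (((isSymbol_const p).mul (ih (p - 1))).smul (hDv.of_le le_top)).congr (hderiv p)
      using 1
    ring

lemma inv {v : E → ℝ} {δ : ℝ} (hv : IsSymbol r ⊤ k v) (hδ : 0 < δ)
    (hlow : ∀ ξ ∈ (closedBall (0 : E) r)ᶜ, δ * ‖ξ‖ ^ k ≤ v ξ) :
    IsSymbol r ⊤ (-k) fun ξ => (v ξ)⁻¹ := by
  simpa using (hv.rpow hδ hlow (-1)).congr fun ξ hξ => rpow_neg_one (v ξ)

lemma exp_neg {φ : E → ℝ} {δ : ℝ} (hφ : IsSymbol r ⊤ 1 φ) (hδ : 0 < δ)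
    (hlow : ∀ ξ ∈ (closedBall (0 : E) r)ᶜ, δ * ‖ξ‖ ≤ φ ξ) (K : ℕ) :
    IsSymbol r ⊤ (-K) fun ξ => exp (-φ ξ) := by
  have hsmooth : ContDiffOn ℝ ∞ (fun ξ => exp (-φ ξ)) (closedBall 0 r)ᶜ := hφ.1.neg.exp
  have hbound (K : ℕ) : ∀ ξ ∈ (closedBall (0 : E) r)ᶜ,
      ‖exp (-φ ξ)‖ ≤ K.factorial / δ ^ K * ‖ξ‖ ^ (-(K : ℝ)) := fun ξ hξ => by
    rw [norm_of_nonneg (exp_pos _).le]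
    exact (exp_le_exp.2 (neg_le_neg (hlow ξ hξ))).trans
      (Real.exp_neg_mul_le hδ (norm_pos_of_mem_compl_closedBall hξ) K)
  have hderiv : EqOn (fun ξ => exp (-φ ξ) • -_root_.fderiv ℝ φ ξ)
      (_root_.fderiv ℝ fun ξ => exp (-φ ξ))
      (closedBall 0 r)ᶜ := fun ξ hξ =>
    ((hφ.contDiffAt hξ).differentiableAt (by simp)).hasFDerivAt.neg.exp.fderiv.symm
  have hDφ : IsSymbol r ⊤ (1 - 1) (_root_.fderiv ℝ φ) := IsSymbol.fderiv (N := ⊤) hφ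
  refine isSymbol_top_of_forall fun n => ?_
  induction n generalizing K with
  | zero => exact zero_of_bound hsmooth _ (hbound K)
  | succ n ih =>
    rw [Nat.cast_succ]
    refine of_fderiv hsmooth _ (hbound K) ?_
    convert ((ih (K + 1)).smul (hDφ.neg.of_le le_top)).congr hderiv using 1
    push_cast
    ring

lemma one_sub_I_mul_ofReal {t : E → ℝ} (ht : IsSymbol r N 0 t) :
    IsSymbol r N 0 fun ξ => 1 - Complex.I * t ξ := by
  have hz : IsSymbol r N 0 fun ξ => t ξ • Complex.I := by
    simpa using ht.smul (isSymbol_const Complex.I)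
  convert (isSymbol_const 1).sub hz using 2 with ξ
  rw [Complex.real_smul, mul_comm]

lemma inv_one_sub_I_mul_ofReal {t : E → ℝ} (ht : IsSymbol r ⊤ 0 t) :
    IsSymbol r ⊤ 0 fun ξ => (1 - Complex.I * t ξ)⁻¹ := by
  have hw : IsSymbol r ⊤ 0 fun ξ => (1 + t ξ ^ 2)⁻¹ := by
    have hv : IsSymbol r ⊤ 0 fun ξ => 1 + t ξ ^ 2 :=
      (isSymbol_const 1).add (by simpa [sq] using ht.mul ht)
    simpa using hv.inv one_pos fun ξ _ => by
      rw [rpow_zero, mul_one]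
      exact le_add_of_nonneg_right (sq_nonneg _)
  have hz : IsSymbol r ⊤ 0 fun ξ => 1 + t ξ • Complex.I :=
    (isSymbol_const 1).add (by simpa using ht.smul (isSymbol_const Complex.I))
  convert hw.smul hz using 1
  · norm_num
  · ext ξ
    exact Complex.inv_one_sub_I_mul_ofReal (t ξ)

end IsSymbol

end SymbolCalculus

section InnerProductSpace

variable {E : Type*} [NormedAddCommGroup E] [InnerProductSpace ℝ E] {r : ℝ≥0}

lemma isSymbol_norm_sq : IsSymbol r ⊤ 2 fun ξ : E => ‖ξ‖ ^ 2 := by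
  have hid := (ContinuousLinearMap.id ℝ E).isSymbol (r := r)
  convert hid.bilinear (innerSL ℝ) hid using 1
  · norm_num
  · ext ξ
    rw [innerSL_apply_apply, real_inner_self_eq_norm_sq, ContinuousLinearMap.id_apply]

lemma isSymbol_norm : IsSymbol r ⊤ 1 fun ξ : E => ‖ξ‖ := by
  have h := (isSymbol_norm_sq (E := E) (r := r)).rpow one_pos
    (fun ξ _ => by rw [one_mul, rpow_two]) (1 / 2)
  convert h.congr fun ξ _ => (sqrt_eq_rpow _).symm.trans (sqrt_sq (norm_nonneg ξ)) using 1
  norm_num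

lemma isSymbol_tanh_mul_norm {b : ℝ} (hb : 0 < b) :
    IsSymbol r ⊤ 0 fun ξ : E => tanh (b * ‖ξ‖) := by
  have hφ : IsSymbol r ⊤ 1 fun ξ : E => 2 * b * ‖ξ‖ := by
    simpa using (isSymbol_const (2 * b)).mul isSymbol_norm
  have hexp : IsSymbol r ⊤ 0 fun ξ : E => exp (-(2 * b * ‖ξ‖)) := by
    simpa using hφ.exp_neg (by positivity) (fun _ _ => le_rfl) 0
  have hinv := ((isSymbol_const 1).add hexp).inv one_pos fun ξ _ => by
    rw [rpow_zero, mul_one, le_add_iff_nonneg_right]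
    exact (exp_pos _).le
  have htwice : IsSymbol r ⊤ 0 fun ξ : E => 2 * (1 + exp (-(2 * b * ‖ξ‖)))⁻¹ := by
    convert (isSymbol_const 2).mul hinv using 1
    norm_num
  convert htwice.sub (isSymbol_const 1) using 1
  ext ξ
  rw [tanh_eq_two_mul_inv_sub_one, mul_assoc]

lemma isSymbol_dispersion {m : E → ℝ} {b : ℝ} (hb : 0 < b) (hr : 0 < r)
    (hm : (∀ ξ, m ξ = ‖ξ‖ * tanh (b * ‖ξ‖)) ∨ ∀ ξ, m ξ = ‖ξ‖) :
    IsSymbol r ⊤ 1 m ∧ ∃ c > 0, ∀ ξ ∈ (closedBall (0 : E) r)ᶜ, c * ‖ξ‖ ≤ m ξ := by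
  rcases hm with hm | hm
  · obtain rfl : m = fun ξ => ‖ξ‖ * tanh (b * ‖ξ‖) := funext hm
    refine ⟨by simpa using isSymbol_norm.mul (isSymbol_tanh_mul_norm hb), tanh (b * r),
      tanh_zero ▸ tanh_strictMono (by positivity), fun ξ hξ => ?_⟩
    show tanh (b * r) * ‖ξ‖ ≤ ‖ξ‖ * tanh (b * ‖ξ‖)
    rw [mul_comm]
    gcongr
    exact tanh_strictMono.monotone (by gcongr; exact (by simpa using hξ : (r : ℝ) < ‖ξ‖).le)
  · obtain rfl : m = fun ξ => ‖ξ‖ := funext hm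
    exact ⟨isSymbol_norm, 1, one_pos, fun ξ _ => (one_mul _).le⟩

lemma isSymbol_inv_norm_sq_add_mul {m : E → ℝ} {σ g c : ℝ} (hr : 0 < r) (hσ : 0 < σ)
    (hg : 0 ≤ g) (hm : IsSymbol r ⊤ 1 m) (hc : 0 < c)
    (hmc : ∀ ξ ∈ (closedBall (0 : E) r)ᶜ, c * ‖ξ‖ ≤ m ξ) :
    IsSymbol r ⊤ (-3) fun ξ => ((σ * ‖ξ‖ ^ 2 + g) * m ξ)⁻¹ := by
  have hq : IsSymbol r ⊤ 2 fun ξ : E => σ * ‖ξ‖ ^ 2 + g := by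
    convert ((isSymbol_const σ).mul isSymbol_norm_sq).add
      ((isSymbol_const g).mono hr (by norm_num)) using 1
    norm_num
  convert (hq.mul hm).inv (mul_pos hσ hc) fun ξ hξ => ?_ using 1
  · norm_num
  rw [show (2 + 1 : ℝ) = (3 : ℕ) by norm_num, rpow_natCast]
  calc σ * c * ‖ξ‖ ^ 3 = σ * ‖ξ‖ ^ 2 * (c * ‖ξ‖) := by ring
    _ ≤ (σ * ‖ξ‖ ^ 2 + g) * m ξ := by
      gcongr
      · linarith
      · exact hmc ξ hξ

end InnerProductSpace

theorem stmt_11_general (d : ℕ) (hd : 0 < d) (σ g γ b : ℝ)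
    (hσ : 0 < σ) (hg : 0 ≤ g) (hb : 0 < b)
    (m : EuclideanSpace ℝ (Fin d) → ℝ)
    (hm : (∀ ξ, m ξ = ‖ξ‖ * Real.tanh (b * ‖ξ‖)) ∨ (∀ ξ, m ξ = ‖ξ‖))
    (a : EuclideanSpace ℝ (Fin d) → ℂ)
    (ha : ∀ ξ, a ξ = 1 - Complex.I * ((γ * ξ ⟨0, hd⟩ : ℝ) : ℂ)
      / (((σ * ‖ξ‖ ^ 2 + g) * m ξ : ℝ) : ℂ)) :
    (∀ ξ, ξ ≠ 0 → a ξ ≠ 0) ∧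
    ∀ n : ℕ, ∃ C : ℝ, 0 < C ∧
      ∀ ξ : EuclideanSpace ℝ (Fin d), 1 / 2 < ‖ξ‖ →
        ‖iteratedFDeriv ℝ n a ξ‖ ≤ C * ‖ξ‖ ^ (-(n : ℝ)) ∧
        ‖iteratedFDeriv ℝ n (fun ζ => (a ζ)⁻¹) ξ‖ ≤ C * ‖ξ‖ ^ (-(n : ℝ)) := by
  set t : EuclideanSpace ℝ (Fin d) → ℝ := fun ξ => γ * ξ ⟨0, hd⟩ * ((σ * ‖ξ‖ ^ 2 + g) * m ξ)⁻¹
  have ha' (ξ) : a ξ = 1 - Complex.I * t ξ := by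
    rw [ha]
    simp only [t]
    push_cast
    ring
  refine ⟨fun ξ _ => ha' ξ ▸ Complex.one_sub_I_mul_ofReal_ne_zero (t ξ), fun n => ?_⟩
  have hr : (0 : ℝ≥0) < 1 / 2 := by norm_num
  obtain ⟨hm, c, hc, hmc⟩ := isSymbol_dispersion hb hr hm
  have ht : IsSymbol (1 / 2) ⊤ 0 t :=
    (((isSymbol_const γ).mul (EuclideanSpace.proj ⟨0, hd⟩).isSymbol).mul
      (isSymbol_inv_norm_sq_add_mul hr hσ hg hm hc hmc)).mono hr (by norm_num)
  have hA := ht.one_sub_I_mul_ofReal.congr fun ξ _ => (ha' ξ).symm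
  have hAinv := ht.inv_one_sub_I_mul_ofReal.congr fun ξ _ => congrArg Inv.inv (ha' ξ).symm
  obtain ⟨C₁, hC₁, h₁⟩ := hA.exists_pos_bound (n := n) le_top
  obtain ⟨C₂, -, h₂⟩ := hAinv.exists_pos_bound (n := n) le_top
  simp only [zero_sub] at h₁ h₂
  refine ⟨max C₁ C₂, lt_max_of_lt_left hC₁, fun ξ hξ => ?_⟩
  have hξ' : ξ ∈ (closedBall 0 ((1 / 2 : ℝ≥0) : ℝ))ᶜ := by simpa using hξ
  exact ⟨(h₁ ξ hξ').trans (by gcongr; exact le_max_left _ _),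
    (h₂ ξ hξ').trans (by gcongr; exact le_max_right _ _)⟩

/-- For `σ > 0`, `g ≥ 0`, `γ ≠ 0`, and `m(ξ) = |ξ|tanh(b|ξ|)` with `b > 0` (or `m(ξ) = |ξ|`),
the symbol `a(ξ) = 1 - iγξ₁/((σ|ξ|² + g)m(ξ))` of `D_η𝓕(0,0)` is nonzero for `ξ ≠ 0`,
and both `a` and `1/a` satisfy the order-zero Mikhlin-type bounds
`|∂^β a(ξ)| ≤ C_β |ξ|^{-|β|}` for `|ξ| > 1/2`. -/
theorem stmt_11 (d : ℕ) (hd : 0 < d) (σ g γ b : ℝ)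
    (hσ : 0 < σ) (hg : 0 ≤ g) (hγ : γ ≠ 0) (hb : 0 < b)
    (m : EuclideanSpace ℝ (Fin d) → ℝ)
    (hm : (∀ ξ, m ξ = ‖ξ‖ * Real.tanh (b * ‖ξ‖)) ∨ (∀ ξ, m ξ = ‖ξ‖))
    (a : EuclideanSpace ℝ (Fin d) → ℂ)
    (ha : ∀ ξ, a ξ = 1 - Complex.I * ((γ * ξ ⟨0, hd⟩ : ℝ) : ℂ)
      / (((σ * ‖ξ‖ ^ 2 + g) * m ξ : ℝ) : ℂ)) :
    (∀ ξ, ξ ≠ 0 → a ξ ≠ 0) ∧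
    ∀ n : ℕ, ∃ C : ℝ, 0 < C ∧
      ∀ ξ : EuclideanSpace ℝ (Fin d), 1 / 2 < ‖ξ‖ →
        ‖iteratedFDeriv ℝ n a ξ‖ ≤ C * ‖ξ‖ ^ (-(n : ℝ)) ∧
        ‖iteratedFDeriv ℝ n (fun ζ => (a ζ)⁻¹) ξ‖ ≤ C * ‖ξ‖ ^ (-(n : ℝ)) :=
  stmt_11_general d hd σ g γ b hσ hg hb m hm a ha
end

section
/- Let σ > 0, g ≥ 0, k ≥ 2, α ∈ (0,1), and suppose f₁, f₂ ∈ C^{k,α}(𝕋^d) satisfy σH(f_j) + g f_j = h_j with h_j ∈ C^{k−2,α}(𝕋^d) (and additionally f_j have mean zero if g = 0). Then σ/(1 + max{‖∇f₁‖_∞, ‖∇f₂‖_∞}²)^{3/2} ∫_{𝕋^d}|∇(f₁−f₂)|² + g ∫_{𝕋^d}(f₁−f₂)² ≤ ∫_{𝕋^d}(h₁−h₂)(f₁−f₂). -/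
open Real

/-- The fundamental cell `[0, 2π]^d` of the torus. -/
def torusBox (d : ℕ) : Set (EuclideanSpace ℝ (Fin d)) :=
  {x | ∀ i, x i ∈ Set.Icc 0 (2 * π)}

/-- The mean curvature operator `H(η) = -div(∇η/√(1+|∇η|²))`. -/
noncomputable def meanCurv {d : ℕ} (η : EuclideanSpace ℝ (Fin d) → ℝ)
    (x : EuclideanSpace ℝ (Fin d)) : ℝ :=
  -∑ i : Fin d,
    fderiv ℝ (fun y => (Real.sqrt (1 + ‖gradient η y‖ ^ 2))⁻¹ * gradient η y i) x
      (EuclideanSpace.single i 1)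

/-!
Write `u = f₁ - f₂` and `H₀(p) = p / √(1 + |p|²)`, so that `H(f) = -div H₀(∇f)`. Multiplying
the difference of the two equations by `u` and integrating over a period cell, periodicity kills
the boundary terms of the divergence theorem, leaving
`∫ (h₁ - h₂) u = σ ∫ ⟪H₀(∇f₁) - H₀(∇f₂), ∇u⟫ + g ∫ u²`.
The strong monotonicity `⟪H₀ p - H₀ q, p - q⟫ ≥ |p - q|² / (1 + K²)^{3/2}` for `|p|, |q| ≤ K`
is elementary: with `a = √(1 + |p|²)`, `b = √(1 + |q|²)` and `t = ⟪p, q⟫`, the left side equals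
`(a + b)(ab - 1 - t) / (ab)`, while `|p - q|² ≤ (ab)² - (1 + t)² ≤ 2ab (ab - 1 - t)`.
-/

open InnerProductSpace MeasureTheory Function

section Flux

lemma div_pow_three_le_inv_mul_sub_add_inv_mul_sub {P Q t a b m : ℝ} (ht : |t| ≤ P * Q)
    (ha : 0 < a) (hb : 0 < b) (ha2 : a ^ 2 = 1 + P ^ 2) (hb2 : b ^ 2 = 1 + Q ^ 2)
    (ham : a ≤ m) (hbm : b ≤ m) :
    (P ^ 2 - 2 * t + Q ^ 2) / m ^ 3 ≤ a⁻¹ * (P ^ 2 - t) + b⁻¹ * (Q ^ 2 - t) := by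
  obtain ⟨htl, htu⟩ := abs_le.mp ht
  have hm : 0 < m := ha.trans_le ham
  have hX : 1 + t ≤ a * b := by
    have hsq : (1 + P * Q) ^ 2 ≤ (a * b) ^ 2 := by nlinarith [sq_nonneg (P - Q)]
    linarith [(abs_le_of_sq_le_sq' hsq (by positivity)).2]
  have hrhs : a⁻¹ * (P ^ 2 - t) + b⁻¹ * (Q ^ 2 - t) =
      (a + b) * (a * b - 1 - t) / (a * b) := by
    field_simp
    linear_combination (-b) * ha2 + (-a) * hb2
  have hnum : P ^ 2 - 2 * t + Q ^ 2 ≤ 2 * (a * b) * (a * b - 1 - t) := by nlinarith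
  have hab : a * b ≤ m ^ 2 := by nlinarith [mul_le_mul ham hbm hb.le hm.le]
  have hden : 2 * (a * b) ^ 2 ≤ (a + b) * m ^ 3 := by
    have h2ab : 2 * (a * b) ≤ (a + b) * m := by nlinarith
    nlinarith [mul_le_mul h2ab hab (by positivity) (by positivity)]
  rw [hrhs, div_le_div_iff₀ (by positivity) (by positivity)]
  nlinarith [mul_le_mul_of_nonneg_right hden (sub_nonneg.mpr hX)]

variable {E : Type*} [NormedAddCommGroup E] [InnerProductSpace ℝ E]

noncomputable def meanCurvFlux (p : E) : E := (√(1 + ‖p‖ ^ 2))⁻¹ • p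

lemma contDiff_meanCurvFlux {n : WithTop ℕ∞} : ContDiff ℝ n (meanCurvFlux : E → E) :=
  ((contDiff_const.add (contDiff_norm_sq ℝ)).sqrt fun _ => by positivity).inv
    (fun _ => by positivity) |>.smul contDiff_id

lemma norm_sub_sq_div_le_inner_meanCurvFlux_sub {K : ℝ} {p q : E} (hp : ‖p‖ ≤ K)
    (hq : ‖q‖ ≤ K) :
    ‖p - q‖ ^ 2 / (1 + K ^ 2) ^ ((3 : ℝ) / 2) ≤
      ⟪meanCurvFlux p - meanCurvFlux q, p - q⟫_ℝ := by
  have hsqrt {v : E} (hv : ‖v‖ ≤ K) : √(1 + ‖v‖ ^ 2) ≤ √(1 + K ^ 2) := by gcongr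
  have hinner : ⟪meanCurvFlux p - meanCurvFlux q, p - q⟫_ℝ =
      (√(1 + ‖p‖ ^ 2))⁻¹ * (‖p‖ ^ 2 - ⟪p, q⟫_ℝ) +
        (√(1 + ‖q‖ ^ 2))⁻¹ * (‖q‖ ^ 2 - ⟪p, q⟫_ℝ) := by
    simp only [meanCurvFlux, inner_sub_left, inner_sub_right, real_inner_smul_left,
      real_inner_self_eq_norm_sq, real_inner_comm p q]
    ring
  rw [rpow_div_two_eq_sqrt _ (by positivity), norm_sub_sq_real, hinner]
  exact_mod_cast div_pow_three_le_inv_mul_sub_add_inv_mul_sub (abs_real_inner_le_norm p q)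
    (by positivity) (by positivity) (sq_sqrt (by positivity)) (sq_sqrt (by positivity))
    (hsqrt hp) (hsqrt hq)

end Flux

section Gradient

variable {E : Type*} [NormedAddCommGroup E] [InnerProductSpace ℝ E] [CompleteSpace E]

lemma gradient_fun_sub {f g : E → ℝ} {x : E} (hf : DifferentiableAt ℝ f x)
    (hg : DifferentiableAt ℝ g x) :
    gradient (fun y => f y - g y) x = gradient f x - gradient g x := by
  simp only [gradient, fderiv_fun_sub hf hg, map_sub]

lemma ContDiff.gradient {f : E → ℝ} {m n : WithTop ℕ∞} (hf : ContDiff ℝ n f)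
    (hmn : m + 1 ≤ n) : ContDiff ℝ m (gradient f) :=
  (toDual ℝ E).symm.toContinuousLinearEquiv.contDiff.comp (hf.fderiv_right hmn)

lemma Function.Periodic.gradient {f : E → ℝ} {a : E} (h : Periodic f a) :
    Periodic (gradient f) a := fun x => by
  simp only [_root_.gradient, ← fderiv_comp_add_right, h.funext]

end Gradient

section Divergence

variable {ι : Type*} [Fintype ι] [DecidableEq ι]

noncomputable def divergence (φ : EuclideanSpace ℝ ι → EuclideanSpace ℝ ι)
    (x : EuclideanSpace ℝ ι) : ℝ :=
  ∑ i, fderiv ℝ (fun y => φ y i) x (EuclideanSpace.single i 1)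

variable {φ ψ : EuclideanSpace ℝ ι → EuclideanSpace ℝ ι} {x : EuclideanSpace ℝ ι}

lemma divergence_fun_sub (hφ : DifferentiableAt ℝ φ x) (hψ : DifferentiableAt ℝ ψ x) :
    divergence (fun y => φ y - ψ y) x = divergence φ x - divergence ψ x := by
  simp only [divergence, ← Finset.sum_sub_distrib, PiLp.sub_apply]
  refine Finset.sum_congr rfl fun i _ => ?_
  rw [fderiv_fun_sub (differentiableAt_euclidean.mp hφ i) (differentiableAt_euclidean.mp hψ i)]
  rfl

lemma inner_gradient_eq_sum (v : EuclideanSpace ℝ ι) (u : EuclideanSpace ℝ ι → ℝ) :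
    ⟪v, gradient u x⟫_ℝ = ∑ i, v i * fderiv ℝ u x (EuclideanSpace.single i 1) := by
  rw [PiLp.inner_apply]
  refine Finset.sum_congr rfl fun i _ => ?_
  rw [← inner_gradient_left, EuclideanSpace.inner_single_right]
  simp [mul_comm]

lemma divergence_fun_smul {u : EuclideanSpace ℝ ι → ℝ} (hu : DifferentiableAt ℝ u x)
    (hφ : DifferentiableAt ℝ φ x) :
    divergence (fun y => u y • φ y) x = u x * divergence φ x + ⟪φ x, gradient u x⟫_ℝ := by
  simp only [divergence, inner_gradient_eq_sum, Finset.mul_sum, ← Finset.sum_add_distrib,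
    PiLp.smul_apply, smul_eq_mul]
  refine Finset.sum_congr rfl fun i _ => ?_
  rw [fderiv_fun_mul hu (differentiableAt_euclidean.mp hφ i)]
  rfl

lemma ContDiff.continuous_divergence (hφ : ContDiff ℝ 1 φ) : Continuous (divergence φ) :=
  continuous_finsetSum _ fun i _ =>
    ((contDiff_euclidean.mp hφ i).continuous_fderiv one_ne_zero).clm_apply continuous_const

end Divergence

section Torus

variable {d : ℕ}

lemma preimage_toLp_torusBox :
    WithLp.toLp 2 ⁻¹' torusBox d = Set.Icc (0 : Fin d → ℝ) (fun _ => 2 * π) := by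
  ext y
  simp [torusBox, Pi.le_def, forall_and]

lemma isCompact_torusBox : IsCompact (torusBox d) := by
  have h := (isCompact_Icc (a := (0 : Fin d → ℝ)) (b := fun _ => 2 * π)).image
    (PiLp.continuous_toLp 2 fun _ : Fin d => ℝ)
  rwa [← preimage_toLp_torusBox, Set.image_preimage_eq _ (WithLp.toLp_surjective 2)] at h

lemma setIntegral_torusBox (F : EuclideanSpace ℝ (Fin d) → ℝ) :
    ∫ x in torusBox d, F x =
      ∫ y in Set.Icc (0 : Fin d → ℝ) (fun _ => 2 * π), F (WithLp.toLp 2 y) := by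
  rw [← preimage_toLp_torusBox, (PiLp.volume_preserving_toLp (Fin d)).setIntegral_preimage_emb
    (MeasurableEquiv.toLp 2 (Fin d → ℝ)).measurableEmbedding]

lemma toLp_insertNth_eq_add_smul_single {n : ℕ} (i : Fin (n + 1)) (c : ℝ) (x : Fin n → ℝ) :
    WithLp.toLp 2 (Fin.insertNth i c x : Fin (n + 1) → ℝ) =
      WithLp.toLp 2 (Fin.insertNth i (0 : ℝ) x) + c • EuclideanSpace.single i (1 : ℝ) := by
  rw [← sub_eq_iff_eq_add', ← WithLp.toLp_sub, Fin.insertNth_sub_same]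
  ext j
  simp [Pi.single_apply]

variable {φ : EuclideanSpace ℝ (Fin d) → EuclideanSpace ℝ (Fin d)}

lemma integral_divergence_torusBox (hφ : ContDiff ℝ 1 φ)
    (hper : ∀ i, Periodic φ ((2 * π) • EuclideanSpace.single i 1)) :
    ∫ x in torusBox d, divergence φ x = 0 := by
  cases d with
  | zero => simp [divergence]
  | succ n =>
  set e := (EuclideanSpace.equiv (Fin (n + 1)) ℝ).symm
  have hcoord : ∀ i, ContDiff ℝ 1 fun y => φ y i := contDiff_euclidean.mp hφ
  have hderiv : ∀ y i, HasFDerivAt (fun y => φ (e y) i)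
      ((fderiv ℝ (fun z => φ z i) (e y)).comp (e : (Fin (n + 1) → ℝ) →L[ℝ] _)) y :=
    fun y i => ((hcoord i).differentiable one_ne_zero _).hasFDerivAt.comp y e.hasFDerivAt
  rw [setIntegral_torusBox]
  refine (integral_divergence_of_hasFDerivAt_off_countable' 0 (fun _ => 2 * π)
    (fun _ => two_pi_pos.le) _ _ ∅ Set.countable_empty
    (fun i => ((hcoord i).continuous.comp e.continuous).continuousOn)
    (fun y _ i => hderiv y i) ?_).trans (Finset.sum_eq_zero fun i _ => sub_eq_zero.mpr ?_)
  · exact (continuous_finsetSum _ fun i _ => (((hcoord i).continuous_fderiv one_ne_zero).comp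
      e.continuous).clm_apply continuous_const).continuousOn.integrableOn_compact isCompact_Icc
  · -- opposite faces of the box carry the same values of `φ`
    refine integral_congr_ae (.of_forall fun x => ?_)
    show φ (WithLp.toLp 2 (Fin.insertNth i (2 * π) x)) i =
      φ (WithLp.toLp 2 (Fin.insertNth i 0 x)) i
    rw [toLp_insertNth_eq_add_smul_single, hper i]

lemma integral_mul_divergence_torusBox {u : EuclideanSpace ℝ (Fin d) → ℝ} (hu : ContDiff ℝ 1 u)
    (hφ : ContDiff ℝ 1 φ) (hu_per : ∀ i, Periodic u ((2 * π) • EuclideanSpace.single i 1))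
    (hφ_per : ∀ i, Periodic φ ((2 * π) • EuclideanSpace.single i 1)) :
    ∫ x in torusBox d, u x * divergence φ x = -∫ x in torusBox d, ⟪φ x, gradient u x⟫_ℝ := by
  have hzero := integral_divergence_torusBox (φ := fun y => u y • φ y) (hu.smul hφ)
    fun i x => congrArg₂ (· • ·) (hu_per i x) (hφ_per i x)
  have hsmul : ∀ x, divergence (fun y => u y • φ y) x =
      u x * divergence φ x + ⟪φ x, gradient u x⟫_ℝ := fun x =>
    divergence_fun_smul (hu.differentiable one_ne_zero x) (hφ.differentiable one_ne_zero x)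
  have hint_div : IntegrableOn (fun x => u x * divergence φ x) (torusBox d) :=
    (hu.continuous.mul hφ.continuous_divergence).continuousOn.integrableOn_compact
      isCompact_torusBox
  have hint_inner : IntegrableOn (fun x => ⟪φ x, gradient u x⟫_ℝ) (torusBox d) :=
    (hφ.continuous.inner (hu.gradient (m := 0) (by norm_num)).continuous).continuousOn
      |>.integrableOn_compact isCompact_torusBox
  simp only [hsmul] at hzero
  rw [integral_add hint_div hint_inner] at hzero
  exact eq_neg_of_add_eq_zero_left hzero

end Torus

section MeanCurvature

variable {d : ℕ}

lemma meanCurv_eq_neg_divergence (η : EuclideanSpace ℝ (Fin d) → ℝ) :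
    meanCurv η = fun x => -divergence (fun y => meanCurvFlux (gradient η y)) x :=
  rfl

lemma contDiff_meanCurvFlux_gradient {f : EuclideanSpace ℝ (Fin d) → ℝ} (hf : ContDiff ℝ 2 f) :
    ContDiff ℝ 1 fun y => meanCurvFlux (gradient f y) :=
  contDiff_meanCurvFlux.comp (hf.gradient (by norm_num))

lemma continuous_meanCurv {f : EuclideanSpace ℝ (Fin d) → ℝ} (hf : ContDiff ℝ 2 f) :
    Continuous (meanCurv f) := by
  rw [meanCurv_eq_neg_divergence]
  exact (contDiff_meanCurvFlux_gradient hf).continuous_divergence.neg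

variable {f₁ f₂ : EuclideanSpace ℝ (Fin d) → ℝ}

lemma integral_meanCurv_sub_mul_sub (hf₁ : ContDiff ℝ 2 f₁) (hf₂ : ContDiff ℝ 2 f₂)
    (hper₁ : ∀ i, Periodic f₁ ((2 * π) • EuclideanSpace.single i 1))
    (hper₂ : ∀ i, Periodic f₂ ((2 * π) • EuclideanSpace.single i 1)) :
    ∫ x in torusBox d, (meanCurv f₁ x - meanCurv f₂ x) * (f₁ x - f₂ x) =
      ∫ x in torusBox d, ⟪meanCurvFlux (gradient f₁ x) - meanCurvFlux (gradient f₂ x),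
        gradient (fun y => f₁ y - f₂ y) x⟫_ℝ := by
  have hV₁ := contDiff_meanCurvFlux_gradient hf₁
  have hV₂ := contDiff_meanCurvFlux_gradient hf₂
  set W := fun y => meanCurvFlux (gradient f₁ y) - meanCurvFlux (gradient f₂ y)
  have hW_per : ∀ i, Periodic W ((2 * π) • EuclideanSpace.single i 1) := fun i =>
    ((hper₁ i).gradient.comp meanCurvFlux).sub ((hper₂ i).gradient.comp meanCurvFlux)
  have hmeanCurv : ∀ x, meanCurv f₁ x - meanCurv f₂ x = -divergence W x := fun x => by
    rw [divergence_fun_sub (hV₁.differentiable one_ne_zero x) (hV₂.differentiable one_ne_zero x)]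
    simp only [meanCurv_eq_neg_divergence]
    ring
  calc ∫ x in torusBox d, (meanCurv f₁ x - meanCurv f₂ x) * (f₁ x - f₂ x)
      = -∫ x in torusBox d, (f₁ x - f₂ x) * divergence W x := by
        simp only [hmeanCurv, mul_neg, integral_neg, mul_comm]
    _ = _ := by
      rw [integral_mul_divergence_torusBox ((hf₁.sub hf₂).of_le (by norm_num)) (hV₁.sub hV₂)
        (fun i => (hper₁ i).sub (hper₂ i)) hW_per, neg_neg]

lemma integral_norm_gradient_sub_sq_div_le {K : ℝ} (hf₁ : ContDiff ℝ 2 f₁)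
    (hf₂ : ContDiff ℝ 2 f₂) (hper₁ : ∀ i, Periodic f₁ ((2 * π) • EuclideanSpace.single i 1))
    (hper₂ : ∀ i, Periodic f₂ ((2 * π) • EuclideanSpace.single i 1))
    (hK₁ : ∀ x, ‖gradient f₁ x‖ ≤ K) (hK₂ : ∀ x, ‖gradient f₂ x‖ ≤ K) :
    (∫ x in torusBox d, ‖gradient (fun y => f₁ y - f₂ y) x‖ ^ 2) / (1 + K ^ 2) ^ ((3 : ℝ) / 2) ≤
      ∫ x in torusBox d, (meanCurv f₁ x - meanCurv f₂ x) * (f₁ x - f₂ x) := by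
  rw [integral_meanCurv_sub_mul_sub hf₁ hf₂ hper₁ hper₂, ← integral_div]
  refine integral_mono_of_nonneg (.of_forall fun x => by positivity) ?_ (.of_forall fun x => ?_)
  · exact (((contDiff_meanCurvFlux_gradient hf₁).sub (contDiff_meanCurvFlux_gradient hf₂))
      |>.continuous.inner ((hf₁.sub hf₂).gradient (m := 0) (by norm_num)).continuous)
      |>.continuousOn.integrableOn_compact isCompact_torusBox
  · dsimp only
    rw [gradient_fun_sub (hf₁.differentiable two_ne_zero x) (hf₂.differentiable two_ne_zero x)]
    exact norm_sub_sq_div_le_inner_meanCurvFlux_sub (hK₁ x) (hK₂ x)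

end MeanCurvature

theorem stmt_16_general (d : ℕ) (σ g : ℝ) (hσ : 0 < σ)
    (f₁ f₂ h₁ h₂ : EuclideanSpace ℝ (Fin d) → ℝ)
    (hf₁ : ContDiff ℝ 2 f₁) (hf₂ : ContDiff ℝ 2 f₂)
    (hper₁ : ∀ (x : EuclideanSpace ℝ (Fin d)) (i : Fin d),
      f₁ (x + (2 * π) • EuclideanSpace.single i 1) = f₁ x)
    (hper₂ : ∀ (x : EuclideanSpace ℝ (Fin d)) (i : Fin d),
      f₂ (x + (2 * π) • EuclideanSpace.single i 1) = f₂ x)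
    (heq₁ : ∀ x, σ * meanCurv f₁ x + g * f₁ x = h₁ x)
    (heq₂ : ∀ x, σ * meanCurv f₂ x + g * f₂ x = h₂ x)
    (K : ℝ) (hK₁ : ∀ x, ‖gradient f₁ x‖ ≤ K) (hK₂ : ∀ x, ‖gradient f₂ x‖ ≤ K) :
    σ / (1 + K ^ 2) ^ ((3 : ℝ) / 2) *
        (∫ x in torusBox d, ‖gradient (fun y => f₁ y - f₂ y) x‖ ^ 2) +
      g * (∫ x in torusBox d, (f₁ x - f₂ x) ^ 2) ≤
      ∫ x in torusBox d, (h₁ x - h₂ x) * (f₁ x - f₂ x) := by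
  have hsplit : ∀ x, (h₁ x - h₂ x) * (f₁ x - f₂ x) =
      σ * ((meanCurv f₁ x - meanCurv f₂ x) * (f₁ x - f₂ x)) + g * (f₁ x - f₂ x) ^ 2 :=
    fun x => by rw [← heq₁, ← heq₂]; ring
  have hu := (hf₁.sub hf₂).continuous
  have hint_meanCurv : IntegrableOn
      (fun x => (meanCurv f₁ x - meanCurv f₂ x) * (f₁ x - f₂ x)) (torusBox d) :=
    (((continuous_meanCurv hf₁).sub (continuous_meanCurv hf₂)).mul hu).continuousOn
      |>.integrableOn_compact isCompact_torusBox
  have hint_sq : IntegrableOn (fun x => (f₁ x - f₂ x) ^ 2) (torusBox d) :=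
    (hu.pow 2).continuousOn.integrableOn_compact isCompact_torusBox
  rw [integral_congr_ae (.of_forall hsplit), integral_add (hint_meanCurv.const_mul σ)
    (hint_sq.const_mul g), integral_const_mul, integral_const_mul, div_mul_eq_mul_div,
    mul_div_assoc]
  exact add_le_add_left (mul_le_mul_of_nonneg_left (integral_norm_gradient_sub_sq_div_le hf₁ hf₂
    (fun i x => hper₁ x i) (fun i x => hper₂ x i) hK₁ hK₂) hσ.le) _

/-- Energy estimate for differences of solutions of the capillary-gravity equation
`σH(f) + gf = h` on the torus: with `K` a uniform bound on `|∇f₁|, |∇f₂|`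
(`K = max{‖∇f₁‖_∞, ‖∇f₂‖_∞}`),
`σ(1+K²)^{-3/2}∫|∇(f₁-f₂)|² + g∫(f₁-f₂)² ≤ ∫(h₁-h₂)(f₁-f₂)`. -/
theorem stmt_16 (d : ℕ) (σ g : ℝ) (hσ : 0 < σ) (hg : 0 ≤ g)
    (f₁ f₂ h₁ h₂ : EuclideanSpace ℝ (Fin d) → ℝ)
    (hf₁ : ContDiff ℝ 2 f₁) (hf₂ : ContDiff ℝ 2 f₂)
    (hcont₁ : Continuous h₁) (hcont₂ : Continuous h₂)
    (hper₁ : ∀ (x : EuclideanSpace ℝ (Fin d)) (i : Fin d),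
      f₁ (x + (2 * π) • EuclideanSpace.single i 1) = f₁ x)
    (hper₂ : ∀ (x : EuclideanSpace ℝ (Fin d)) (i : Fin d),
      f₂ (x + (2 * π) • EuclideanSpace.single i 1) = f₂ x)
    (heq₁ : ∀ x, σ * meanCurv f₁ x + g * f₁ x = h₁ x)
    (heq₂ : ∀ x, σ * meanCurv f₂ x + g * f₂ x = h₂ x)
    (hmean : g = 0 → (∫ x in torusBox d, f₁ x = 0) ∧ (∫ x in torusBox d, f₂ x = 0))
    (K : ℝ) (hK₁ : ∀ x, ‖gradient f₁ x‖ ≤ K) (hK₂ : ∀ x, ‖gradient f₂ x‖ ≤ K) :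
    σ / (1 + K ^ 2) ^ ((3 : ℝ) / 2) *
        (∫ x in torusBox d, ‖gradient (fun y => f₁ y - f₂ y) x‖ ^ 2) +
      g * (∫ x in torusBox d, (f₁ x - f₂ x) ^ 2) ≤
      ∫ x in torusBox d, (h₁ x - h₂ x) * (f₁ x - f₂ x) :=
  stmt_16_general d σ g hσ f₁ f₂ h₁ h₂ hf₁ hf₂ hper₁ hper₂ heq₁ heq₂ K hK₁ hK₂
end
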